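/- For s ≥ 0, let h^s denote the set of sequences u : ℕ → ℂ with Σ_{n∈ℕ} (1+n)^{2s}|u_n|² < ∞, which is a Hilbert space with norm ‖u‖_{h^s} = (Σ_n (1+n)^{2s}|u_n|²)^{1/2}. Then for every σ ≥ 0, the set h̃^σ = h^σ \ ⋃_{s>σ} h^s, consisting of those u ∈ h^σ that belong to no h^s with s > σ, is a dense G_δ (comeager) subset of the Hilbert space h^σ. -/

import Mathlib

/-!
By the Baire category theorem it suffices to write `h̃^σ` as a countable intersection of open
dense subsets of `h^σ`. With `s_j = σ + 1/(j+1)`, an element lies in `h̃^σ` iff for every `j` and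
every `M ∈ ℕ` some partial sum `∑_{n<N} (1+n)^{2 s_j} |f_n|²` exceeds `M`. These conditions
define open sets because point evaluations are continuous on `h^σ` (every point is an atom of
positive mass). They are dense: if a ball `B(f, r)` had all its partial sums bounded by `M`, so
would `f ± c δ_n` for the spike `c δ_n` of `h^σ`-norm `r/2`, and the parallelogram law would give
`(1+n)^{2 s} c² ≤ M`, whereas this quantity grows like `(1+n)^{2(s-σ)}`.
-/

open MeasureTheory ENNReal

/-- The weighted counting measure on `ℕ` realizing the Sobolev sequence space `h^s` as
`L²(ℕ, hMeasure s)`: the point `n` carries mass `(1+n)^{2s}`. -/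
noncomputable def hMeasure (s : ℝ) : Measure ℕ :=
  Measure.sum fun n : ℕ => ((1 + (n : ℝ≥0∞)) ^ (2 * s)) • (Measure.dirac n : Measure ℕ)

section Atom

variable {α E : Type*} [MeasurableSpace α] [NormedAddCommGroup E] {μ : Measure α} {a : α}

lemma Filter.EventuallyEq.eq_of_measure_singleton_ne_zero {β : Type*} {f g : α → β}
    (hfg : f =ᵐ[μ] g) (ha : μ {a} ≠ 0) : f a = g a := by
  by_contra hne
  exact ha (measure_mono_null (Set.singleton_subset_iff.2 hne) hfg)

namespace MeasureTheory.Lp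

variable {p : ℝ≥0∞}

lemma add_apply_of_measure_singleton_ne_zero (ha : μ {a} ≠ 0) (f g : Lp E p μ) :
    (f + g) a = f a + g a :=
  (coeFn_add f g).eq_of_measure_singleton_ne_zero ha

lemma sub_apply_of_measure_singleton_ne_zero (ha : μ {a} ≠ 0) (f g : Lp E p μ) :
    (f - g) a = f a - g a :=
  (coeFn_sub f g).eq_of_measure_singleton_ne_zero ha

variable [MeasurableSingletonClass α]

lemma indicatorConstLp_singleton_apply (ha : μ {a} ≠ 0) (ha' : μ {a} ≠ ∞) (c : E) :
    indicatorConstLp p (measurableSet_singleton a) ha' c a = c := by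
  rw [indicatorConstLp_coeFn.eq_of_measure_singleton_ne_zero ha]
  simp

lemma norm_apply_mul_le (ha : μ {a} ≠ 0) (hp : p ≠ 0) (f : Lp E p μ) :
    ‖f a‖ * μ.real {a} ^ (1 / p.toReal) ≤ ‖f‖ := by
  have hind : ({a} : Set α).indicator f = ({a} : Set α).indicator fun _ ↦ f a := by
    ext x; by_cases hx : x = a <;> simp [hx]
  have h := eLpNorm_indicator_le (s := {a}) (p := p) (μ := μ) f
  rw [hind, eLpNorm_indicator_const' (measurableSet_singleton a) ha hp] at h
  rw [Lp.norm_def, measureReal_def, ← toReal_enorm, ENNReal.toReal_rpow, ← ENNReal.toReal_mul]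
  exact ENNReal.toReal_mono (Lp.eLpNorm_ne_top f) h

lemma continuous_apply_of_measure_singleton [Fact (1 ≤ p)] (ha : μ {a} ≠ 0)
    (ha' : μ {a} ≠ ∞) : Continuous fun f : Lp E p μ ↦ f a := by
  have hμ : 0 < μ.real {a} ^ (1 / p.toReal) :=
    Real.rpow_pos_of_pos (ENNReal.toReal_pos ha ha') _
  let ev : Lp E p μ →+ E :=
    AddMonoidHom.mk' (fun f ↦ f a) (add_apply_of_measure_singleton_ne_zero ha)
  refine AddMonoidHomClass.continuous_of_bound ev (μ.real {a} ^ (1 / p.toReal))⁻¹ fun f ↦ ?_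
  rw [inv_mul_eq_div, le_div_iff₀ hμ]
  exact norm_apply_mul_le ha (zero_lt_one.trans_le Fact.out).ne' f

end MeasureTheory.Lp

end Atom

open Finset Filter

section hMeasure

variable (s : ℝ) (n : ℕ)

lemma hMeasure_singleton : hMeasure s {n} = (1 + (n : ℝ≥0∞)) ^ (2 * s) := by
  rw [hMeasure, Measure.sum_apply _ (measurableSet_singleton n), tsum_eq_single n]
  · simp
  · intro m hm
    simp [Ne.symm hm]

lemma hMeasure_singleton_ne_zero : hMeasure s {n} ≠ 0 := by
  rw [hMeasure_singleton]
  exact (ENNReal.rpow_pos (by positivity) (by simp)).ne'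

lemma hMeasure_singleton_ne_top : hMeasure s {n} ≠ ∞ := by
  rw [hMeasure_singleton]
  exact ENNReal.rpow_ne_top_of_ne_zero (by positivity) (by simp)

lemma hMeasure_real_singleton : (hMeasure s).real {n} = (1 + (n : ℝ)) ^ (2 * s) := by
  rw [measureReal_def, hMeasure_singleton, ← ENNReal.toReal_rpow]
  norm_cast

end hMeasure

def sobolevBall (s M : ℝ) : Set (ℕ → ℂ) :=
  {u | ∀ N, ∑ n ∈ range N, (1 + (n : ℝ)) ^ (2 * s) * ‖u n‖ ^ 2 ≤ M}

lemma weight_mul_norm_sq_le_of_mem_sobolevBall {s M : ℝ} {u : ℕ → ℂ} (hu : u ∈ sobolevBall s M)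
    (n : ℕ) : (1 + (n : ℝ)) ^ (2 * s) * ‖u n‖ ^ 2 ≤ M :=
  (single_le_sum (f := fun m : ℕ ↦ (1 + (m : ℝ)) ^ (2 * s) * ‖u m‖ ^ 2)
    (fun _ _ ↦ by positivity) (self_mem_range_succ n)).trans (hu (n + 1))

lemma summable_iff_exists_mem_sobolevBall (s : ℝ) (u : ℕ → ℂ) :
    (Summable fun n : ℕ ↦ (1 + (n : ℝ)) ^ (2 * s) * ‖u n‖ ^ 2) ↔
      ∃ M : ℕ, u ∈ sobolevBall s M := by
  constructor
  · intro hu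
    exact ⟨⌈∑' n : ℕ, (1 + (n : ℝ)) ^ (2 * s) * ‖u n‖ ^ 2⌉₊, fun N ↦
      (hu.sum_le_tsum _ fun n _ ↦ by positivity).trans (Nat.le_ceil _)⟩
  · rintro ⟨M, hM⟩
    exact summable_of_sum_range_le (fun n ↦ by positivity) hM

lemma Summable.of_sobolev_weight_le {s t : ℝ} (hts : t ≤ s) {u : ℕ → ℂ}
    (hu : Summable fun n : ℕ ↦ (1 + (n : ℝ)) ^ (2 * s) * ‖u n‖ ^ 2) :
    Summable fun n : ℕ ↦ (1 + (n : ℝ)) ^ (2 * t) * ‖u n‖ ^ 2 :=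
  hu.of_nonneg_of_le (fun n ↦ by positivity) fun n ↦ mul_le_mul_of_nonneg_right
    (Real.rpow_le_rpow_of_exponent_le (by simp) (by linarith)) (by positivity)

lemma setOf_forall_not_summable_eq_iInter (σ : ℝ) :
    {u : ℕ → ℂ | ∀ s : ℝ, σ < s → ¬ Summable fun n : ℕ ↦ (1 + (n : ℝ)) ^ (2 * s) * ‖u n‖ ^ 2} =
      ⋂ jM : ℕ × ℕ, (sobolevBall (σ + 1 / (jM.1 + 1)) jM.2)ᶜ := by
  ext u
  simp only [Set.mem_ofPred_eq, Set.mem_iInter, Set.mem_compl_iff, Prod.forall]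
  constructor
  · intro hu j M hM
    exact hu _ (lt_add_of_pos_right σ Nat.one_div_pos_of_nat)
      ((summable_iff_exists_mem_sobolevBall _ u).2 ⟨M, hM⟩)
  · intro hu s hs hsum
    obtain ⟨j, hj⟩ := exists_nat_one_div_lt (sub_pos.2 hs)
    obtain ⟨M, hM⟩ := (summable_iff_exists_mem_sobolevBall _ u).1
      (hsum.of_sobolev_weight_le (t := σ + 1 / (j + 1)) (by linarith))
    exact hu j M hM

section Lp

variable {σ : ℝ}

lemma continuous_apply_hMeasure (n : ℕ) : Continuous fun f : Lp ℂ 2 (hMeasure σ) ↦ f n :=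
  Lp.continuous_apply_of_measure_singleton (hMeasure_singleton_ne_zero σ n)
    (hMeasure_singleton_ne_top σ n)

lemma isClosed_preimage_sobolevBall (s M : ℝ) :
    IsClosed ((⇑) ⁻¹' sobolevBall s M : Set (Lp ℂ 2 (hMeasure σ))) := by
  simp only [sobolevBall, Set.ofPred_forall, Set.preimage_iInter, Set.preimage_ofPred_eq]
  exact isClosed_iInter fun N ↦ isClosed_le (continuous_finsetSum _ fun n _ ↦
    continuous_const.mul ((continuous_apply_hMeasure n).norm.pow 2)) continuous_const

lemma dense_compl_preimage_sobolevBall {s : ℝ} (hs : σ < s) (M : ℝ) :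
    Dense ((⇑) ⁻¹' sobolevBall s M : Set (Lp ℂ 2 (hMeasure σ)))ᶜ := by
  rw [← interior_eq_empty_iff_dense_compl, Set.eq_empty_iff_forall_notMem]
  intro f hf
  obtain ⟨r, hr, hball⟩ := Metric.mem_nhds_iff.1 (mem_interior_iff_mem_nhds.1 hf)
  have hgrow : Tendsto (fun n : ℕ ↦ (r / 2) ^ 2 * (1 + (n : ℝ)) ^ (2 * (s - σ))) atTop atTop :=
    ((tendsto_rpow_atTop (by linarith)).comp
      (tendsto_atTop_add_const_left _ 1 tendsto_natCast_atTop_atTop)).const_mul_atTop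
      (by positivity)
  obtain ⟨n, hn⟩ := (hgrow.eventually_gt_atTop M).exists
  set x : ℝ := 1 + n
  have hx : 0 < x := by positivity
  set c : ℝ := r / 2 / x ^ σ
  set δ : Lp ℂ 2 (hMeasure σ) :=
    indicatorConstLp 2 (measurableSet_singleton n) (hMeasure_singleton_ne_top σ n) (c : ℂ)
  have hδ : ‖δ‖ = r / 2 := by
    rw [norm_indicatorConstLp (by norm_num) (by norm_num), hMeasure_real_singleton,
      Complex.norm_real, Real.norm_of_nonneg (by positivity), ← Real.rpow_mul hx.le,
      ENNReal.toReal_ofNat, show 2 * σ * (1 / 2) = σ by ring,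
      div_mul_cancel₀ _ (Real.rpow_pos_of_pos hx σ).ne']
  have hδn : δ n = c :=
    Lp.indicatorConstLp_singleton_apply (hMeasure_singleton_ne_zero σ n) _ _
  have hbound : ∀ g ∈ Metric.ball f r, x ^ (2 * s) * ‖g n‖ ^ 2 ≤ M := fun g hg ↦
    weight_mul_norm_sq_le_of_mem_sobolevBall (hball hg) n
  have hplus := hbound (f + δ) (by simp [hδ, hr])
  have hminus := hbound (f - δ) (by simp [hδ, hr])
  rw [Lp.add_apply_of_measure_singleton_ne_zero (hMeasure_singleton_ne_zero σ n), hδn] at hplus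
  rw [Lp.sub_apply_of_measure_singleton_ne_zero (hMeasure_singleton_ne_zero σ n), hδn] at hminus
  have hpar := parallelogram_law_with_norm ℝ (f n) (c : ℂ)
  have hc : x ^ (2 * s) * ‖(c : ℂ)‖ ^ 2 = (r / 2) ^ 2 * x ^ (2 * (s - σ)) := by
    rw [Complex.norm_real, Real.norm_eq_abs, sq_abs, div_pow, ← Real.rpow_natCast (x ^ σ),
      ← Real.rpow_mul hx.le, mul_sub, Real.rpow_sub hx]
    push_cast
    ring_nf
  nlinarith [norm_nonneg (f n), Real.rpow_pos_of_pos hx (2 * s)]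

end Lp

theorem stmt16_general (σ : ℝ) :
    Dense {f : Lp ℂ 2 (hMeasure σ) |
        ∀ s : ℝ, σ < s → ¬ Summable fun n : ℕ => (1 + (n : ℝ)) ^ (2 * s) * ‖f n‖ ^ 2} ∧
      IsGδ {f : Lp ℂ 2 (hMeasure σ) |
        ∀ s : ℝ, σ < s → ¬ Summable fun n : ℕ => (1 + (n : ℝ)) ^ (2 * s) * ‖f n‖ ^ 2} := by
  have hset := congrArg (Set.preimage fun f : Lp ℂ 2 (hMeasure σ) ↦ (f : ℕ → ℂ))
    (setOf_forall_not_summable_eq_iInter σ)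
  simp only [Set.preimage_ofPred_eq, Set.preimage_iInter, Set.preimage_compl] at hset
  rw [hset]
  have hopen : ∀ jM : ℕ × ℕ, IsOpen ((⇑) ⁻¹' sobolevBall (σ + 1 / (jM.1 + 1)) jM.2 :
      Set (Lp ℂ 2 (hMeasure σ)))ᶜ :=
    fun _ ↦ (isClosed_preimage_sobolevBall _ _).isOpen_compl
  exact ⟨dense_iInter_of_isOpen hopen fun jM ↦
      dense_compl_preimage_sobolevBall (lt_add_of_pos_right σ Nat.one_div_pos_of_nat) _,
    IsGδ.iInter_of_isOpen hopen⟩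

/-- In the Hilbert space `h^σ` (realized as `L²` of the weighted counting
measure with weights `(1+n)^{2σ}`), the set `h̃^σ` of elements belonging to no `h^s` with
`s > σ` is a dense `G_δ` (comeager) subset. -/
theorem stmt16 (σ : ℝ) (hσ : 0 ≤ σ) :
    Dense {f : Lp ℂ 2 (hMeasure σ) |
        ∀ s : ℝ, σ < s → ¬ Summable fun n : ℕ => (1 + (n : ℝ)) ^ (2 * s) * ‖f n‖ ^ 2} ∧
      IsGδ {f : Lp ℂ 2 (hMeasure σ) |
        ∀ s : ℝ, σ < s → ¬ Summable fun n : ℕ => (1 + (n : ℝ)) ^ (2 * s) * ‖f n‖ ^ 2} :=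
  stmt16_general σ
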